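/- Let V be a p-dimensional subspace of Euclidean space ℝ^N, let P be the orthogonal projection of ℝ^N onto V, let D : ℝ^N → ℝ^N be a linear map, and for t ∈ ℝ let V(t) = (I + tD)(V). Set X₀ = (I − P) ∘ D ∘ P. Then there is ε > 0 such that for |t| < ε the subspace V(t) has dimension p, the curve t ↦ P(V(t)) of orthogonal projections is differentiable at t = 0 with derivative X₀ + X₀ᵀ, and for every orthonormal basis e_1, ..., e_p of V the squared Frobenius norm of this derivative equals 2·Σ_{i=1}^{p} ‖(I − P)(D e_i)‖². (This is Lemma 1 of the paper: the speed ‖\dot V(0)‖ of a linear curve V(t) generated by e_i(t) = e_i + t d_i, d_i = D e_i, equals the norm ‖𝒱H D‖ of the horizontal components (d_i)^j, j > p, of the derivatives; the factor 2 accounts for the normalization of the projection embedding relative to the submersion metric on the Grassmannian.) -/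

import Mathlib

open Finset

/-- The orthogonal projection of `ℝ^N` onto a subspace `W`, as an endomorphism of `ℝ^N`. -/
noncomputable def projOnto {N : ℕ} (W : Submodule ℝ (EuclideanSpace ℝ (Fin N))) :
    EuclideanSpace ℝ (Fin N) →L[ℝ] EuclideanSpace ℝ (Fin N) :=
  W.subtypeL ∘L W.orthogonalProjectionOnto

/-- `X₀ = (I − P) ∘ D ∘ P`, where `P` is the orthogonal projection onto `V`. -/
noncomputable def Xzero {N : ℕ} (V : Submodule ℝ (EuclideanSpace ℝ (Fin N)))
    (D : EuclideanSpace ℝ (Fin N) →L[ℝ] EuclideanSpace ℝ (Fin N)) :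
    EuclideanSpace ℝ (Fin N) →L[ℝ] EuclideanSpace ℝ (Fin N) :=
  (1 - projOnto V) ∘L D ∘L projOnto V

/-!
Write `P` for the orthogonal projection onto `V`, `A t = 1 + t • D` and `M t = A t ∘ P`. The
projection onto `V(t) = A t (V)` has the closed form `M (M* M + (1 - P))⁻¹ M*` as long as the
middle operator is invertible, which holds near `t = 0` where it equals `1`. Differentiating this
product at `t = 0`, where `M = M* = P`, gives `X₀ + X₀*` with `X₀ = (1 - P) D P`. Since
`X₀² = 0`, the ranges of `X₀` and `X₀*` are orthogonal, so `‖X₀ + X₀*‖²_F = ‖X₀‖²_F + ‖X₀*‖²_F =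
2 ‖X₀‖²_F`, and as `X₀` vanishes on `Vᗮ` its Frobenius norm can be computed on a basis of `V`.
-/

open ContinuousLinearMap Filter Topology
open scoped RealInnerProductSpace

section

variable {E : Type*} [NormedAddCommGroup E] [InnerProductSpace ℝ E] {κ : Type*} [Fintype κ]

theorem Orthonormal.norm_sq_eq_sum_inner_sq_of_mem_span {e : κ → E} (he : Orthonormal ℝ e)
    {y : E} (hy : y ∈ Submodule.span ℝ (Set.range e)) : ‖y‖ ^ 2 = ∑ i, ⟪e i, y⟫ ^ 2 := by
  obtain ⟨c, rfl⟩ := (Submodule.mem_span_range_iff_exists_fun ℝ).1 hy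
  rw [← real_inner_self_eq_norm_sq, he.inner_sum]
  simp_rw [he.inner_right_fintype, RCLike.conj_to_real, sq]

variable [CompleteSpace E] {ι : Type*} [Fintype ι]

theorem OrthonormalBasis.sum_norm_sq_apply_eq_sum_norm_sq_adjoint_apply
    (b : OrthonormalBasis ι ℝ E) {e : κ → E} (he : Orthonormal ℝ e) {T : E →L[ℝ] E}
    (hT : ∀ x, T x ∈ Submodule.span ℝ (Set.range e)) :
    ∑ j, ‖T (b j)‖ ^ 2 = ∑ i, ‖adjoint T (e i)‖ ^ 2 := by
  calc ∑ j, ‖T (b j)‖ ^ 2 = ∑ j, ∑ i, ⟪adjoint T (e i), b j⟫ ^ 2 := by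
        simp_rw [he.norm_sq_eq_sum_inner_sq_of_mem_span (hT _), adjoint_inner_left]
    _ = ∑ i, ‖adjoint T (e i)‖ ^ 2 := by
        rw [Finset.sum_comm]
        simp_rw [b.sum_sq_inner_left]

theorem OrthonormalBasis.sum_norm_sq_apply_eq_sum_norm_sq_adjoint_apply_self
    (b : OrthonormalBasis ι ℝ E) (T : E →L[ℝ] E) :
    ∑ j, ‖T (b j)‖ ^ 2 = ∑ j, ‖adjoint T (b j)‖ ^ 2 :=
  b.sum_norm_sq_apply_eq_sum_norm_sq_adjoint_apply b.orthonormal fun _ => by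
    rw [← b.coe_toBasis, b.toBasis.span_eq]
    trivial

theorem norm_sq_add_adjoint_apply_of_mul_self_eq_zero {T : E →L[ℝ] E} (hT : T * T = 0) (x : E) :
    ‖(T + adjoint T) x‖ ^ 2 = ‖T x‖ ^ 2 + ‖adjoint T x‖ ^ 2 := by
  have horth : ⟪T x, adjoint T x⟫ = 0 := by
    rw [adjoint_inner_right, ← mul_apply_eq_comp, hT, zero_apply, inner_zero_left]
  rw [add_apply, norm_add_sq_real, horth]
  ring

theorem OrthonormalBasis.sum_sq_inner_add_adjoint_of_mul_self_eq_zero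
    (b : OrthonormalBasis ι ℝ E) {T : E →L[ℝ] E} (hT : T * T = 0) :
    ∑ i, ∑ j, ⟪b i, (T + adjoint T) (b j)⟫ ^ 2 = 2 * ∑ j, ‖adjoint T (b j)‖ ^ 2 := by
  rw [Finset.sum_comm]
  simp_rw [b.sum_sq_inner_right, norm_sq_add_adjoint_apply_of_mul_self_eq_zero hT,
    Finset.sum_add_distrib, b.sum_norm_sq_apply_eq_sum_norm_sq_adjoint_apply_self T]
  ring

theorem adjoint_one_add_smul_mul (D : E →L[ℝ] E) {P : E →L[ℝ] E} (hP : IsSelfAdjoint P) (t : ℝ) :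
    adjoint ((1 + t • D) * P) = P * (1 + t • adjoint D) := by
  simp only [← star_eq_adjoint, star_mul, star_add, star_one, star_smul, star_trivial, hP.star_eq]

end

theorem HasDerivAt.ringInverse {𝕜 R : Type*} [NontriviallyNormedField 𝕜] [NormedRing R]
    [NormedAlgebra 𝕜 R] [HasSummableGeomSeries R] {f : 𝕜 → R} {f' : R} {x : 𝕜}
    (hf : HasDerivAt f f' x) (hx : IsUnit (f x)) :
    HasDerivAt (fun t => Ring.inverse (f t))
      (-(Ring.inverse (f x) * f' * Ring.inverse (f x))) x := by
  obtain ⟨u, hu⟩ := hx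
  have hinv := hasFDerivAt_ringInverse (𝕜 := 𝕜) u
  rw [hu] at hinv
  rw [← hu, Ring.inverse_unit]
  have := hinv.comp_hasDerivAt x hf
  simp only [neg_apply, mulLeftRight_apply] at this
  exact this

theorem eventually_isUnit_one_add_smul {𝕜 R : Type*} [NontriviallyNormedField 𝕜] [NormedRing R]
    [NormedAlgebra 𝕜 R] [HasSummableGeomSeries R] (D : R) :
    ∀ᶠ t in 𝓝 (0 : 𝕜), IsUnit (1 + t • D) := by
  have hc : Continuous fun t : 𝕜 => 1 + t • D := by fun_prop
  exact hc.continuousAt.eventually_mem (Units.isOpen.mem_nhds (by simp))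

theorem Submodule.finrank_map_of_isUnit {R E : Type*} [Ring R] [TopologicalSpace E]
    [AddCommGroup E] [Module R E] {K : Submodule R E} {A : E →L[R] E} (hA : IsUnit A) :
    Module.finrank R (K.map (A : E →ₗ[R] E)) = Module.finrank R K := by
  obtain ⟨u, rfl⟩ := hA
  exact (ContinuousLinearEquiv.ofUnit u).toLinearEquiv.finrank_map_eq K

/-- With `M = A * P_K`, the Gram operator `M* M` vanishes on `Kᗮ`; adding `1 - P_K` makes it
invertible there without changing it on `K`. -/
theorem Submodule.starProjection_map_eq {𝕜 E : Type*} [RCLike 𝕜] [NormedAddCommGroup E]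
    [InnerProductSpace 𝕜 E] [CompleteSpace E] (K : Submodule 𝕜 E) [K.HasOrthogonalProjection]
    (A : E →L[𝕜] E) [(K.map (A : E →ₗ[𝕜] E)).HasOrthogonalProjection]
    (hG : IsUnit (adjoint (A * K.starProjection) * (A * K.starProjection)
      + (1 - K.starProjection))) :
    (K.map (A : E →ₗ[𝕜] E)).starProjection =
      A * K.starProjection
        * Ring.inverse (adjoint (A * K.starProjection) * (A * K.starProjection)
          + (1 - K.starProjection))
        * adjoint (A * K.starProjection) := by
  set P := K.starProjection
  set M := A * P
  set G := adjoint M * M + (1 - P)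
  have hPP : P * P = P := K.isIdempotentElem_starProjection
  have hPM : P * adjoint M = adjoint M := by
    rw [← star_eq_adjoint, star_mul, (isSelfAdjoint_starProjection K).star_eq, ← mul_assoc, hPP]
  have hQM : (1 - P) * adjoint M = 0 := by rw [sub_mul, one_mul, hPM, sub_self]
  have hQG : (1 - P) * G = 1 - P := by
    simp only [G, mul_add, ← mul_assoc, hQM, zero_mul, zero_add, mul_sub, mul_one, sub_mul,
      one_mul, hPP, sub_self, sub_zero]
  have hQGinv : (1 - P) * Ring.inverse G = 1 - P := by
    rw [← hQG, mul_assoc, Ring.mul_inverse_cancel G hG, mul_one, hQG]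
  have hGram : adjoint M * M * Ring.inverse G * adjoint M = adjoint M := by
    calc adjoint M * M * Ring.inverse G * adjoint M
        = (G - (1 - P)) * Ring.inverse G * adjoint M := by simp only [G, add_sub_cancel_right]
      _ = adjoint M := by
        rw [sub_mul, Ring.mul_inverse_cancel G hG, hQGinv, sub_mul, one_mul, hQM, sub_zero]
  ext x
  refine Submodule.eq_starProjection_of_mem_of_inner_eq_zero ?_ ?_
  · simp only [M, mul_apply_eq_comp]
    exact Submodule.mem_map_of_mem (K.starProjection_apply_mem _)
  · rintro _ ⟨v, hv, rfl⟩
    have hMv : A v = M v := by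
      simp [M, P, mul_apply_eq_comp, Submodule.starProjection_eq_self_iff.2 hv]
    rw [ContinuousLinearMap.coe_coe, hMv, ← adjoint_inner_left, map_sub, ← mul_apply_eq_comp,
      ← mul_assoc, ← mul_assoc, hGram, sub_self, inner_zero_left]

section

variable {E : Type*} [NormedAddCommGroup E] [InnerProductSpace ℝ E] [FiniteDimensional ℝ E]

theorem hasDerivAt_starProjection_map_one_add_smul (K : Submodule ℝ E) (D : E →L[ℝ] E) :
    HasDerivAt (fun t : ℝ => (K.map ((1 + t • D : E →L[ℝ] E) : E →ₗ[ℝ] E)).starProjection)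
      ((1 - K.starProjection) * D * K.starProjection
        + adjoint ((1 - K.starProjection) * D * K.starProjection)) 0 := by
  set P := K.starProjection
  have hPP : P * P = P := K.isIdempotentElem_starProjection
  have hP : IsSelfAdjoint P := isSelfAdjoint_starProjection K
  set M : ℝ → E →L[ℝ] E := fun t => (1 + t • D) * P
  set G : ℝ → E →L[ℝ] E := fun t => adjoint (M t) * M t + (1 - P)
  have hM0 : M 0 = P := by simp [M]
  have hG0 : G 0 = 1 := by simp [G, hM0, hP.adjoint_eq, hPP]
  have hM : HasDerivAt M (D * P) 0 := by
    simpa using (((hasDerivAt_id (0 : ℝ)).smul_const D).const_add 1).mul_const P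
  have hMadj : HasDerivAt (fun t => adjoint (M t)) (P * adjoint D) 0 := by
    simp_rw [M, adjoint_one_add_smul_mul D hP]
    simpa using (((hasDerivAt_id (0 : ℝ)).smul_const (adjoint D)).const_add 1).const_mul P
  have hG : HasDerivAt G (P * adjoint D * P + P * (D * P)) 0 := by
    have := (hMadj.mul hM).add_const (1 - P)
    rwa [hM0, hP.adjoint_eq] at this
  have hGunit : ∀ᶠ t in 𝓝 0, IsUnit (G t) :=
    hG.continuousAt.eventually_mem (Units.isOpen.mem_nhds (by simp [hG0]))
  have hproj := hGunit.mono fun t ht => K.starProjection_map_eq _ ht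
  refine ((hM.mul (hG.ringInverse (hG0 ▸ isUnit_one))).mul hMadj).congr_of_eventuallyEq hproj
    |>.congr_deriv ?_
  have hPP' : ∀ X, X * P * P = X * P := fun X => by rw [mul_assoc, hPP]
  simp only [Pi.mul_apply, hG0, hM0, Ring.inverse_one, ← star_eq_adjoint, star_mul, star_sub,
    hP.star_eq, mul_add, add_mul, sub_mul, mul_neg, neg_mul, mul_one, one_mul, ← mul_assoc, hPP,
    hPP']
  abel

variable {ι κ : Type*} [Fintype ι] [Fintype κ]

theorem OrthonormalBasis.sum_sq_inner_horizontal_add_adjoint (b : OrthonormalBasis ι ℝ E)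
    (K : Submodule ℝ E) (D : E →L[ℝ] E) {e : κ → E} (he : Orthonormal ℝ e)
    (hspan : Submodule.span ℝ (Set.range e) = K) :
    ∑ i, ∑ j, ⟪b i, ((1 - K.starProjection) * D * K.starProjection
        + adjoint ((1 - K.starProjection) * D * K.starProjection) : E →L[ℝ] E) (b j)⟫ ^ 2
      = 2 * ∑ i, ‖(1 - K.starProjection) (D (e i))‖ ^ 2 := by
  set P := K.starProjection
  have hP0 : P * (1 - P) = 0 := by
    rw [mul_sub, mul_one, K.isIdempotentElem_starProjection.eq, sub_self]
  have hXX : (1 - P) * D * P * ((1 - P) * D * P) = 0 := by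
    simp only [mul_assoc, ← mul_assoc P (1 - P), hP0, zero_mul, mul_zero]
  have hXadj : ∀ x, adjoint ((1 - P) * D * P) x ∈ Submodule.span ℝ (Set.range e) := fun x => by
    rw [← star_eq_adjoint, star_mul, (isSelfAdjoint_starProjection K).star_eq, mul_apply_eq_comp,
      hspan]
    exact K.starProjection_apply_mem _
  rw [b.sum_sq_inner_add_adjoint_of_mul_self_eq_zero hXX,
    b.sum_norm_sq_apply_eq_sum_norm_sq_adjoint_apply he hXadj, adjoint_adjoint]
  congr 1
  refine Finset.sum_congr rfl fun i _ => ?_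
  rw [mul_apply_eq_comp, mul_apply_eq_comp,
    K.starProjection_eq_self_iff.2 (hspan ▸ Submodule.subset_span ⟨i, rfl⟩)]

end

/-- **Lemma 1 of the paper.**  Let `V` be a `p`-dimensional subspace of `ℝ^N` with
orthogonal projection `P`, let `D : ℝ^N → ℝ^N` be linear, and let `V(t) = (I + tD)(V)` be
the corresponding linear curve of subspaces.  Set `X₀ = (I − P) ∘ D ∘ P`.  Then for small
`t` the subspace `V(t)` is `p`-dimensional, the curve `t ↦ P(V(t))` of orthogonal
projections is differentiable at `t = 0` with derivative `X₀ + X₀ᵀ`, and for every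
orthonormal basis `e₁, …, e_p` of `V` the squared Frobenius norm of this derivative
(computed in any orthonormal basis of `ℝ^N`) equals `2 · Σᵢ ‖(I − P)(D eᵢ)‖²`. -/
theorem speed_of_linear_curve (N p : ℕ) (V : Submodule ℝ (EuclideanSpace ℝ (Fin N)))
    (hV : Module.finrank ℝ V = p)
    (D : EuclideanSpace ℝ (Fin N) →L[ℝ] EuclideanSpace ℝ (Fin N)) :
    ∃ ε > (0 : ℝ),
      (∀ t : ℝ, |t| < ε →
        Module.finrank ℝ
          (Submodule.map (((1 : EuclideanSpace ℝ (Fin N) →L[ℝ] EuclideanSpace ℝ (Fin N)) + t • D :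
            EuclideanSpace ℝ (Fin N) →L[ℝ] EuclideanSpace ℝ (Fin N)) : EuclideanSpace ℝ (Fin N) →ₗ[ℝ] EuclideanSpace ℝ (Fin N)) V) = p) ∧
      HasDerivAt
        (fun t : ℝ =>
          projOnto (Submodule.map (((1 : EuclideanSpace ℝ (Fin N) →L[ℝ] EuclideanSpace ℝ (Fin N)) + t • D :
            EuclideanSpace ℝ (Fin N) →L[ℝ] EuclideanSpace ℝ (Fin N)) : EuclideanSpace ℝ (Fin N) →ₗ[ℝ] EuclideanSpace ℝ (Fin N)) V))
        (Xzero V D + ContinuousLinearMap.adjoint (Xzero V D)) 0 ∧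
      ∀ (b : OrthonormalBasis (Fin N) ℝ (EuclideanSpace ℝ (Fin N)))
        (e : Fin p → EuclideanSpace ℝ (Fin N)), Orthonormal ℝ e →
        (∀ i, e i ∈ V) → Submodule.span ℝ (Set.range e) = V →
        ∑ i : Fin N, ∑ j : Fin N,
            (inner ℝ (b i)
              ((Xzero V D + ContinuousLinearMap.adjoint (Xzero V D)) (b j)) : ℝ) ^ 2
          = 2 * ∑ i : Fin p, ‖(1 - projOnto V) (D (e i))‖ ^ 2 := by
  obtain ⟨ε, hε, hrank⟩ := Metric.eventually_nhds_iff.1 <|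
    (eventually_isUnit_one_add_smul (𝕜 := ℝ) D).mono fun t ht =>
      (Submodule.finrank_map_of_isUnit (K := V) ht).trans hV
  exact ⟨ε, hε, fun t ht => hrank (by rwa [Real.dist_0_eq_abs]),
    hasDerivAt_starProjection_map_one_add_smul V D,
    fun b e he _ hspan => b.sum_sq_inner_horizontal_add_adjoint V D he hspan⟩
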